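/- For every θ = (α, β, σ_ε²) ∈ ℝ × ℝ × (0,∞), almost surely (1/n) log R_n(θ) → −h₁(θ) as n → ∞, and moreover lim_{n→∞} (1/n) E[log R_n(θ)] = −h₁(θ), where h₁(α,β,σ_ε²) = (1/2) log(σ_ε²/σ₀²) + σ₀²/(2σ_ε²) + E_X[(η₀(X) − α − βX)²]/(2σ_ε²) − 1/2. -/

import Mathlib

open MeasureTheory Filter Finset ProbabilityTheory

/-- The `N(μ, s)` density (with variance `s`) evaluated at `y`. -/
noncomputable def normalPdf (y μ s : ℝ) : ℝ :=
  (Real.sqrt (2 * Real.pi * s))⁻¹ * Real.exp (-((y - μ) ^ 2) / (2 * s))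

/-- Expectation with respect to the uniform distribution on a set `𝒳 ⊆ ℝ`:
`E_X[g(X)] = |𝒳|⁻¹ ∫_𝒳 g(t) dt`. -/
noncomputable def EX (𝒳 : Set ℝ) (g : ℝ → ℝ) : ℝ :=
  (MeasureTheory.volume 𝒳).toReal⁻¹ * ∫ t in 𝒳, g t

/-- The Kullback–Leibler divergence rate of the linear model from the truth:
`h₁(α,β,σ_ε²) = (1/2) log(σ_ε²/σ₀²) + σ₀²/(2σ_ε²) + E_X[(η₀(X)-α-βX)²]/(2σ_ε²) - 1/2`. -/
noncomputable def hLin (𝒳 : Set ℝ) (η₀ : ℝ → ℝ) (s₀ α β s : ℝ) : ℝ :=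
  (1 / 2) * Real.log (s / s₀) + s₀ / (2 * s)
    + EX 𝒳 (fun t => (η₀ t - α - β * t) ^ 2) / (2 * s) - 1 / 2

/-!
Writing `y_i = η₀(x_i) + ε_i`, the `i`-th log-likelihood ratio is
`-KL(N(η₀(x_i), σ₀²) ‖ N(α + βx_i, σ_ε²)) + A (ε_i² - σ₀²) + b_i ε_i` with a constant `A` and
bounded weights `b_i`. The Kullback–Leibler terms average to `h₁` by the Riemann-sum condition;
the centred squares average to `0` almost surely by the strong law of large numbers, and so do the
weighted Gaussian errors, by Hoeffding's inequality and Borel–Cantelli. Both centred terms have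
mean zero, which gives the limit of the expectations.
-/

open Real
open scoped NNReal Topology

lemma Finset.sum_Icc_one_eq_sum_range {M : Type*} [AddCommMonoid M] (f : ℕ → M) (n : ℕ) :
    ∑ i ∈ Icc 1 n, f i = ∑ i ∈ range n, f (i + 1) := by
  rw [range_eq_Ico, sum_Ico_add']
  rfl

lemma tendsto_average_Icc_const (c : ℝ) :
    Tendsto (fun n : ℕ => 1 / (n : ℝ) * ∑ _i ∈ Icc 1 n, c) atTop (𝓝 c) := by
  refine tendsto_const_nhds.congr' ?_
  filter_upwards [eventually_ne_atTop 0] with n hn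
  simp [field]

namespace ProbabilityTheory

variable {Ω : Type*} [MeasurableSpace Ω] {P : Measure Ω}

lemma ae_tendsto_average_Icc_of_iIndepFun {E : Type*} [MeasurableSpace E] {μ : Measure E}
    {X : ℕ → Ω → E} (hX : ∀ i, Measurable (X i)) (hind : iIndepFun X P)
    (hlaw : ∀ i, P.map (X i) = μ) {g : E → ℝ} (hg : Measurable g) (hgμ : Integrable g μ) :
    ∀ᵐ ω ∂P, Tendsto (fun n : ℕ => 1 / (n : ℝ) * ∑ i ∈ Icc 1 n, g (X i ω)) atTop
      (𝓝 (∫ x, g x ∂μ)) := by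
  set Z : ℕ → Ω → ℝ := fun i ω => g (X (i + 1) ω)
  have hident i : IdentDistrib (Z i) (Z 0) P P :=
    (IdentDistrib.mk (hX _).aemeasurable (hX _).aemeasurable (by rw [hlaw, hlaw])).comp hg
  have hint : Integrable (Z 0) P := by
    rw [← hlaw 1] at hgμ
    exact (integrable_map_measure hg.aestronglyMeasurable (hX 1).aemeasurable).1 hgμ
  have hindep : Pairwise fun i j => IndepFun (Z i) (Z j) P :=
    fun i j hij => (hind.indepFun (by omega)).comp hg hg
  filter_upwards [strong_law_ae_real Z hint hindep hident] with ω hω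
  rw [← hlaw 1, integral_map (hX 1).aemeasurable hg.aestronglyMeasurable]
  simpa only [Finset.sum_Icc_one_eq_sum_range, one_div_mul_eq_div] using hω

namespace HasSubgaussianMGF

variable {X : ℕ → Ω → ℝ}

lemma mono {Y : Ω → ℝ} {c c' : ℝ≥0} (h : HasSubgaussianMGF Y c P) (hc : c ≤ c') :
    HasSubgaussianMGF Y c' P :=
  ⟨h.integrable_exp_mul, fun t => (h.mgf_le t).trans (exp_le_exp.2 (by gcongr))⟩

lemma of_map_eq_gaussianReal {Y : Ω → ℝ} {v : ℝ≥0} (hY : AEMeasurable Y P)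
    (h : P.map Y = gaussianReal 0 v) : HasSubgaussianMGF Y v P := by
  rw [← id_map_iff hY, h]
  exact ⟨integrable_exp_mul_gaussianReal, fun t => by simp [mgf_id_gaussianReal]⟩

lemma measure_abs_sum_ge_le_of_iIndepFun [IsFiniteMeasure P] (hind : iIndepFun X P)
    {c : ℕ → ℝ≥0} {s : Finset ℕ} (hX : ∀ i ∈ s, HasSubgaussianMGF (X i) (c i) P) {t : ℝ}
    (ht : 0 ≤ t) :
    P.real {ω | t ≤ |∑ i ∈ s, X i ω|} ≤ 2 * exp (-t ^ 2 / (2 * ∑ i ∈ s, c i)) := by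
  have hneg : iIndepFun (fun i => -X i) P := hind.comp (fun _ x => -x) fun _ => measurable_neg
  calc P.real {ω | t ≤ |∑ i ∈ s, X i ω|}
      ≤ P.real ({ω | t ≤ ∑ i ∈ s, X i ω} ∪ {ω | t ≤ ∑ i ∈ s, (-X i) ω}) := by
        refine measureReal_mono fun ω hω => ?_
        simpa only [Set.mem_union, Set.mem_ofPred_eq, Pi.neg_apply, sum_neg_distrib]
          using le_abs.1 hω
    _ ≤ _ := measureReal_union_le _ _
    _ ≤ _ := by
        rw [two_mul]
        exact add_le_add (measure_sum_ge_le_of_iIndepFun hind hX ht)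
          (measure_sum_ge_le_of_iIndepFun hneg (fun i hi => (hX i hi).neg) ht)

lemma ae_eventually_abs_sum_Icc_lt [IsFiniteMeasure P] (hind : iIndepFun X P) {c : ℝ≥0}
    (hc : 0 < c) (hX : ∀ i, HasSubgaussianMGF (X i) c P) {δ : ℝ} (hδ : 0 < δ) :
    ∀ᵐ ω ∂P, ∀ᶠ n : ℕ in atTop, |∑ i ∈ Icc 1 n, X i ω| < n * δ := by
  have hbound : ∀ n : ℕ, P {ω | n * δ ≤ |∑ i ∈ Icc 1 n, X i ω|}
      ≤ ENNReal.ofReal (2 * exp (n * -(δ ^ 2 / (2 * c)))) := by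
    intro n
    rw [← ofReal_measureReal]
    refine ENNReal.ofReal_le_ofReal ((measure_abs_sum_ge_le_of_iIndepFun hind
      (fun i _ => hX i) (by positivity)).trans_eq ?_)
    rw [sum_const, Nat.card_Icc, Nat.add_sub_cancel, nsmul_eq_mul]
    rcases eq_or_ne (n : ℝ) 0 with hn | hn
    · simp [hn]
    · congr 2
      push_cast
      field_simp
  have hsum : Summable fun n : ℕ => 2 * exp (n * -(δ ^ 2 / (2 * c))) :=
    (summable_exp_nat_mul_iff.2 (neg_neg_of_pos (by positivity))).mul_left 2
  filter_upwards [ae_eventually_notMem (ne_top_of_le_ne_top hsum.tsum_ofReal_ne_top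
    (ENNReal.tsum_le_tsum hbound))] with ω hω
  simpa using hω

lemma ae_tendsto_average_Icc_zero [IsFiniteMeasure P] (hind : iIndepFun X P) {c : ℝ≥0}
    (hX : ∀ i, HasSubgaussianMGF (X i) c P) :
    ∀ᵐ ω ∂P, Tendsto (fun n : ℕ => 1 / (n : ℝ) * ∑ i ∈ Icc 1 n, X i ω) atTop (𝓝 0) := by
  -- Hoeffding's bound is vacuous when `c = 0` (then `-t ^ 2 / 0 = 0`), hence `c + 1`.
  have h : ∀ k : ℕ, ∀ᵐ ω ∂P, ∀ᶠ n : ℕ in atTop, |∑ i ∈ Icc 1 n, X i ω| < n * (1 / (k + 1)) :=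
    fun k => ae_eventually_abs_sum_Icc_lt hind (c := c + 1) (by positivity)
      (fun i => (hX i).mono le_self_add) (by positivity)
  filter_upwards [ae_all_iff.2 h] with ω hω
  rw [NormedAddGroup.tendsto_nhds_zero]
  intro e he
  obtain ⟨k, hk⟩ := exists_nat_one_div_lt he
  filter_upwards [hω k, eventually_gt_atTop 0] with n hn hn0
  rw [norm_mul, norm_div, norm_one, RCLike.norm_natCast, Real.norm_eq_abs, one_div_mul_eq_div,
    div_lt_iff₀ (by positivity)]
  nlinarith

end HasSubgaussianMGF

lemma ae_tendsto_average_Icc_mul_zero_of_gaussianReal [IsFiniteMeasure P]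
    {ε : ℕ → Ω → ℝ} (hε : ∀ i, Measurable (ε i)) (hind : iIndepFun ε P) {v : ℝ≥0}
    (hlaw : ∀ i, P.map (ε i) = gaussianReal 0 v) {b : ℕ → ℝ} {B : ℝ} (hb : ∀ i, |b i| ≤ B) :
    ∀ᵐ ω ∂P, Tendsto (fun n : ℕ => 1 / (n : ℝ) * ∑ i ∈ Icc 1 n, b i * ε i ω) atTop (𝓝 0) := by
  refine HasSubgaussianMGF.ae_tendsto_average_Icc_zero
    (hind.comp (fun i x => b i * x) fun i => measurable_const_mul (b i))
    (c := ⟨B ^ 2, sq_nonneg B⟩ * v) fun i => ?_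
  refine ((HasSubgaussianMGF.of_map_eq_gaussianReal (hε i).aemeasurable (hlaw i)).const_mul
    (b i)).mono (mul_le_mul_left ?_ v)
  exact sq_le_sq' (abs_le.1 (hb i)).1 (abs_le.1 (hb i)).2

lemma map_const_add_eq_gaussianReal {ε : Ω → ℝ} (hε : Measurable ε) {v : ℝ≥0}
    (hlaw : P.map ε = gaussianReal 0 v) (c : ℝ) :
    P.map (fun ω => c + ε ω) = gaussianReal c v := by
  change P.map ((c + ·) ∘ ε) = _
  rw [← Measure.map_map (measurable_const_add c) hε, hlaw, gaussianReal_map_const_add, zero_add]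

lemma integrable_sub_gaussianReal (μ : ℝ) (v : ℝ≥0) :
    Integrable (fun y => y - μ) (gaussianReal μ v) :=
  ((memLp_id_gaussianReal 1).integrable le_rfl).sub (integrable_const μ)

lemma integrable_sub_sq_gaussianReal (μ : ℝ) (v : ℝ≥0) :
    Integrable (fun y => (y - μ) ^ 2) (gaussianReal μ v) :=
  ((memLp_id_gaussianReal 2).sub (memLp_const μ)).integrable_sq

lemma integral_sub_sq_gaussianReal (μ : ℝ) (v : ℝ≥0) :
    ∫ y, (y - μ) ^ 2 ∂gaussianReal μ v = v := by
  have h := variance_eq_integral (X := fun y => y) aemeasurable_id' (μ := gaussianReal μ v)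
  rwa [variance_fun_id_gaussianReal, integral_id_gaussianReal, eq_comm] at h

lemma integrable_mul_sub_sq_sub_gaussianReal (A μ : ℝ) (v : ℝ≥0) :
    Integrable (fun y => A * ((y - μ) ^ 2 - v)) (gaussianReal μ v) :=
  ((integrable_sub_sq_gaussianReal μ v).sub (integrable_const _)).const_mul A

lemma integral_mul_sub_sq_sub_gaussianReal (A μ : ℝ) (v : ℝ≥0) :
    ∫ y, A * ((y - μ) ^ 2 - v) ∂gaussianReal μ v = 0 := by
  rw [integral_const_mul, integral_sub (integrable_sub_sq_gaussianReal μ v) (integrable_const _),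
    integral_sub_sq_gaussianReal]
  simp

end ProbabilityTheory

/-- The Kullback–Leibler divergence of `N(μ, s)` from `N(μ₀, v)`. -/
noncomputable def gaussianKL (μ₀ v μ s : ℝ) : ℝ :=
  1 / 2 * log (s / v) + v / (2 * s) + (μ₀ - μ) ^ 2 / (2 * s) - 1 / 2

lemma normalPdf_pos (y μ : ℝ) {s : ℝ} (hs : 0 < s) : 0 < normalPdf y μ s := by
  unfold normalPdf
  positivity

lemma log_prod_normalPdf_div_normalPdf {s v : ℝ} (hs : 0 < s) (hv : 0 < v) (t : Finset ℕ)
    (y μ μ₀ : ℕ → ℝ) :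
    log (∏ i ∈ t, normalPdf (y i) (μ i) s / normalPdf (y i) (μ₀ i) v)
      = ∑ i ∈ t, log (normalPdf (y i) (μ i) s / normalPdf (y i) (μ₀ i) v) :=
  log_prod fun _ _ => (div_pos (normalPdf_pos _ _ hs) (normalPdf_pos _ _ hv)).ne'

lemma log_normalPdf_div_normalPdf {s v : ℝ} (hs : 0 < s) (hv : 0 < v) (y μ μ₀ : ℝ) :
    log (normalPdf y μ s / normalPdf y μ₀ v)
      = -gaussianKL μ₀ v μ s + (1 / (2 * v) - 1 / (2 * s)) * ((y - μ₀) ^ 2 - v)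
        + -((μ₀ - μ) / s) * (y - μ₀) := by
  have hπ : 0 < 2 * π := by positivity
  rw [log_div (normalPdf_pos y μ hs).ne' (normalPdf_pos y μ₀ hv).ne', normalPdf, normalPdf,
    log_mul (by positivity) (exp_pos _).ne', log_mul (by positivity) (exp_pos _).ne',
    log_inv, log_inv, log_sqrt (by positivity), log_sqrt (by positivity), log_exp, log_exp,
    mul_comm (2 * π), mul_comm (2 * π), log_mul hs.ne' hπ.ne', log_mul hv.ne' hπ.ne',
    gaussianKL, log_div hs.ne' hv.ne']
  field_simp
  ring

section LogLikelihoodRatio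

variable {μ₀ μ s : ℝ} {v : ℝ≥0}

lemma integrable_log_normalPdf_div_normalPdf (hs : 0 < s) (hv : 0 < v) :
    Integrable (fun y => log (normalPdf y μ s / normalPdf y μ₀ v)) (gaussianReal μ₀ v) := by
  simp_rw [log_normalPdf_div_normalPdf hs (NNReal.coe_pos.2 hv)]
  exact ((integrable_const _).add (integrable_mul_sub_sq_sub_gaussianReal _ μ₀ v)).add
    ((integrable_sub_gaussianReal μ₀ v).const_mul _)

lemma integral_log_normalPdf_div_normalPdf (hs : 0 < s) (hv : 0 < v) :
    ∫ y, log (normalPdf y μ s / normalPdf y μ₀ v) ∂gaussianReal μ₀ v = -gaussianKL μ₀ v μ s := by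
  simp_rw [log_normalPdf_div_normalPdf hs (NNReal.coe_pos.2 hv), ← Pi.add_def]
  have hlin : ∫ y, y - μ₀ ∂gaussianReal μ₀ v = 0 := by
    rw [integral_sub (f := fun y => y) ((memLp_id_gaussianReal 1).integrable le_rfl)
      (integrable_const _), integral_id_gaussianReal]
    simp
  rw [integral_add' ((integrable_const _).add (integrable_mul_sub_sq_sub_gaussianReal _ μ₀ v))
      ((integrable_sub_gaussianReal μ₀ v).const_mul _),
    integral_add' (integrable_const _) (integrable_mul_sub_sq_sub_gaussianReal _ μ₀ v),
    integral_mul_sub_sq_sub_gaussianReal, integral_const_mul, hlin]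
  simp

variable {Ω : Type*} [MeasurableSpace Ω] {P : Measure Ω} {Y : Ω → ℝ}

lemma integrable_log_normalPdf_div_normalPdf_comp (hY : AEMeasurable Y P)
    (hlaw : P.map Y = gaussianReal μ₀ v) (hs : 0 < s) (hv : 0 < v) :
    Integrable (fun ω => log (normalPdf (Y ω) μ s / normalPdf (Y ω) μ₀ v)) P := by
  have h := integrable_log_normalPdf_div_normalPdf (μ₀ := μ₀) (μ := μ) hs hv
  rw [← hlaw] at h
  exact h.comp_aemeasurable hY

lemma integral_log_normalPdf_div_normalPdf_comp (hY : AEMeasurable Y P)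
    (hlaw : P.map Y = gaussianReal μ₀ v) (hs : 0 < s) (hv : 0 < v) :
    ∫ ω, log (normalPdf (Y ω) μ s / normalPdf (Y ω) μ₀ v) ∂P = -gaussianKL μ₀ v μ s := by
  have h := integrable_log_normalPdf_div_normalPdf (μ₀ := μ₀) (μ := μ) hs hv
  rw [← hlaw] at h
  rw [← integral_map hY h.aestronglyMeasurable, hlaw, integral_log_normalPdf_div_normalPdf hs hv]

end LogLikelihoodRatio

lemma tendsto_average_Icc_gaussianKL {𝒳 : Set ℝ} {η₀ : ℝ → ℝ} {v α β s : ℝ} {x : ℕ → ℝ}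
    (h : Tendsto (fun n : ℕ => 1 / (n : ℝ) * ∑ i ∈ Icc 1 n, (η₀ (x i) - α - β * x i) ^ 2) atTop
      (𝓝 (EX 𝒳 fun t => (η₀ t - α - β * t) ^ 2))) :
    Tendsto (fun n : ℕ => 1 / (n : ℝ) * ∑ i ∈ Icc 1 n, gaussianKL (η₀ (x i)) v (α + β * x i) s)
      atTop (𝓝 (hLin 𝒳 η₀ v α β s)) := by
  set K := 1 / 2 * log (s / v) + v / (2 * s) - 1 / 2
  have hKL : ∀ t, gaussianKL (η₀ t) v (α + β * t) s = K + (η₀ t - α - β * t) ^ 2 / (2 * s) :=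
    fun t => by simp only [gaussianKL, K]; ring
  convert (tendsto_average_Icc_const K).add (h.div_const (2 * s)) using 2
  · simp only [hKL, sum_add_distrib, mul_add, ← sum_div, mul_div_assoc]
  · simp only [hLin, K]
    ring

theorem linear_regression_equipartition_general
    (𝒳 : Set ℝ) (hXcomp : IsCompact 𝒳)
    (η₀ : ℝ → ℝ) (hη₀ : ContinuousOn η₀ 𝒳)
    (v₀ : NNReal) (hv₀ : 0 < v₀)
    -- the fixed design and its Riemann-sum property
    (x : ℕ → ℝ) (hx : ∀ i, x i ∈ 𝒳)
    (hriemann : ∀ g : ℝ → ℝ, ContinuousOn g 𝒳 →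
      Tendsto (fun n : ℕ => (1 / (n : ℝ)) * ∑ i ∈ Finset.Icc 1 n, g (x i)) atTop
        (nhds (EX 𝒳 g)))
    -- the i.i.d. `N(0, σ₀²)` errors and the responses of the true model
    {Ω : Type*} [MeasurableSpace Ω] (P : Measure Ω) [IsProbabilityMeasure P]
    (ε : ℕ → Ω → ℝ) (hεmeas : ∀ i, Measurable (ε i))
    (hεindep : iIndepFun ε P)
    (hεdist : ∀ i, P.map (ε i) = gaussianReal 0 v₀)
    (y : ℕ → Ω → ℝ) (hy : ∀ i ω, y i ω = η₀ (x i) + ε i ω) :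
    ∀ α β s : ℝ, 0 < s →
      ((∀ᵐ ω ∂P, Tendsto
          (fun n : ℕ => (1 / (n : ℝ)) * Real.log (∏ i ∈ Finset.Icc 1 n,
            normalPdf (y i ω) (α + β * x i) s / normalPdf (y i ω) (η₀ (x i)) (v₀ : ℝ)))
          atTop (nhds (-hLin 𝒳 η₀ (v₀ : ℝ) α β s))) ∧
        Tendsto
          (fun n : ℕ => (1 / (n : ℝ)) * ∫ ω, Real.log (∏ i ∈ Finset.Icc 1 n,
            normalPdf (y i ω) (α + β * x i) s / normalPdf (y i ω) (η₀ (x i)) (v₀ : ℝ)) ∂P)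
          atTop (nhds (-hLin 𝒳 η₀ (v₀ : ℝ) α β s))) := by
  intro α β s hs
  obtain rfl : y = fun i ω => η₀ (x i) + ε i ω := funext₂ hy
  have hKL := (tendsto_average_Icc_gaussianKL (v := v₀) (s := s)
    (hriemann (fun t => (η₀ t - α - β * t) ^ 2) (by fun_prop))).neg
  simp only [log_prod_normalPdf_div_normalPdf hs (NNReal.coe_pos.2 hv₀)]
  constructor
  · obtain ⟨B, hB⟩ := hXcomp.exists_bound_of_continuousOn
      (f := fun t => -((η₀ t - (α + β * t)) / s)) (by fun_prop)
    have hsq := ae_tendsto_average_Icc_of_iIndepFun hεmeas hεindep hεdist (by fun_prop)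
      (integrable_mul_sub_sq_sub_gaussianReal (1 / (2 * (v₀ : ℝ)) - 1 / (2 * s)) 0 v₀)
    have hcross := ae_tendsto_average_Icc_mul_zero_of_gaussianReal hεmeas hεindep hεdist
      (fun i => hB (x i) (hx i))
    filter_upwards [hsq, hcross] with ω hsq hcross
    rw [integral_mul_sub_sq_sub_gaussianReal] at hsq
    simpa only [log_normalPdf_div_normalPdf hs (NNReal.coe_pos.2 hv₀), add_sub_cancel_left,
      sub_zero, sum_add_distrib, mul_add, sum_neg_distrib, mul_neg, add_zero]
      using (hKL.add hsq).add hcross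
  · have hlaw i := map_const_add_eq_gaussianReal (hεmeas i) (hεdist i) (η₀ (x i))
    have hmeas i := ((hεmeas i).const_add (η₀ (x i))).aemeasurable (μ := P)
    refine hKL.congr fun n => ?_
    rw [integral_finsetSum _ fun i _ =>
      integrable_log_normalPdf_div_normalPdf_comp (hmeas i) (hlaw i) hs hv₀]
    simp only [integral_log_normalPdf_div_normalPdf_comp (hmeas _) (hlaw _) hs hv₀,
      sum_neg_distrib, mul_neg]

/-- **Asymptotic equipartition for the forward linear regression model.**  The true model
is `y_i = η₀(x_i) + ε_i` with `ε_i` i.i.d. `N(0, σ₀²)`, the design `(x_i) ⊆ 𝒳` (compact,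
of positive Lebesgue measure) satisfies the Riemann-sum condition, and the linear model
`M₁` has likelihood ratio
`R_n(θ) = ∏_{i=1}^n φ(y_i; α+βx_i, σ_ε²)/φ(y_i; η₀(x_i), σ₀²)`.  Then for every
`θ = (α, β, σ_ε²)` with `σ_ε² > 0`, almost surely `(1/n) log R_n(θ) → -h₁(θ)`, and
moreover `(1/n) E[log R_n(θ)] → -h₁(θ)`. -/
theorem linear_regression_equipartition
    (𝒳 : Set ℝ) (hXmeas : MeasurableSet 𝒳) (hXcomp : IsCompact 𝒳)
    (hXvol : 0 < (volume 𝒳).toReal)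
    (η₀ : ℝ → ℝ) (hη₀ : ContinuousOn η₀ 𝒳)
    (v₀ : NNReal) (hv₀ : 0 < v₀)
    -- the fixed design and its Riemann-sum property
    (x : ℕ → ℝ) (hx : ∀ i, x i ∈ 𝒳)
    (hriemann : ∀ g : ℝ → ℝ, ContinuousOn g 𝒳 →
      Tendsto (fun n : ℕ => (1 / (n : ℝ)) * ∑ i ∈ Finset.Icc 1 n, g (x i)) atTop
        (nhds (EX 𝒳 g)))
    -- the i.i.d. `N(0, σ₀²)` errors and the responses of the true model
    {Ω : Type*} [MeasurableSpace Ω] (P : Measure Ω) [IsProbabilityMeasure P]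
    (ε : ℕ → Ω → ℝ) (hεmeas : ∀ i, Measurable (ε i))
    (hεindep : iIndepFun ε P)
    (hεdist : ∀ i, P.map (ε i) = gaussianReal 0 v₀)
    (y : ℕ → Ω → ℝ) (hy : ∀ i ω, y i ω = η₀ (x i) + ε i ω) :
    ∀ α β s : ℝ, 0 < s →
      ((∀ᵐ ω ∂P, Tendsto
          (fun n : ℕ => (1 / (n : ℝ)) * Real.log (∏ i ∈ Finset.Icc 1 n,
            normalPdf (y i ω) (α + β * x i) s / normalPdf (y i ω) (η₀ (x i)) (v₀ : ℝ)))
          atTop (nhds (-hLin 𝒳 η₀ (v₀ : ℝ) α β s))) ∧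
        Tendsto
          (fun n : ℕ => (1 / (n : ℝ)) * ∫ ω, Real.log (∏ i ∈ Finset.Icc 1 n,
            normalPdf (y i ω) (α + β * x i) s / normalPdf (y i ω) (η₀ (x i)) (v₀ : ℝ)) ∂P)
          atTop (nhds (-hLin 𝒳 η₀ (v₀ : ℝ) α β s))) :=
  linear_regression_equipartition_general 𝒳 hXcomp η₀ hη₀ v₀ hv₀ x hx hriemann P ε hεmeas hεindep
    hεdist y hy
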